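/- Let n ≥ 3, let G = K_{n,n} be the complete bipartite graph with parts V₁ and V₂ each of size n, and let G' be obtained from G by adding one edge {x,y} between two distinct vertices x, y ∈ V₁. Then λ(G', K₂) < 1, where K₂ is the complete graph on two vertices; in particular, λ(G', K₂) < λ(G, K₂) = 1, so adding an edge can strictly decrease λ(·, K₂). -/

import Mathlib

open scoped Classical
open Finset

/-- Degree of a vertex in a finite simple graph. -/
noncomputable def gdeg {V : Type*} [Fintype V] (G : SimpleGraph V) (v : V) : ℕ :=
  (G.neighborSet v).ncard

/-- The volume of a finite simple graph: the sum of the degrees of all vertices. -/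
noncomputable def gvol {V : Type*} [Fintype V] (G : SimpleGraph V) : ℕ :=
  ∑ v, gdeg G v

/-- The Rayleigh-type quotient `R_f(G, X)` for an embedding `f : V(G) → X` where `X`
carries a distance function `d`.  The sum over ordered pairs of adjacent vertices divided
by `2` is the sum over edges of `G`; the sum over ordered pairs of distinct vertices divided
by `2` is the sum over unordered pairs of distinct vertices of `G`. -/
noncomputable def Rf {V X : Type*} [Fintype V] (G : SimpleGraph V) (d : X → X → ℝ)
    (f : V → X) : ℝ :=
  ((gvol G : ℝ) * ((∑ u, ∑ v, if G.Adj u v then d (f u) (f v) ^ 2 else 0) / 2)) /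
    ((∑ u, ∑ v, if u ≠ v then d (f u) (f v) ^ 2 * (gdeg G u : ℝ) * (gdeg G v : ℝ) else 0) / 2)

/-- `lam G d` is `λ(G, X)`: the infimum of `R_f(G, X)` over nonconstant `f : V(G) → X`. -/
noncomputable def lam {V X : Type*} [Fintype V] (G : SimpleGraph V) (d : X → X → ℝ) : ℝ :=
  sInf {r | ∃ f : V → X, (∃ u v, f u ≠ f v) ∧ r = Rf G d f}

/-- The diameter of a finite simple graph: the maximum shortest-path distance over pairs. -/
noncomputable def gDiam {V : Type*} [Fintype V] (H : SimpleGraph V) : ℕ :=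
  Finset.univ.sup fun p : V × V => H.dist p.1 p.2

/-- The maximum degree of a finite simple graph. -/
noncomputable def gMaxDeg {V : Type*} [Fintype V] (G : SimpleGraph V) : ℕ :=
  Finset.univ.sup (gdeg G)

/-- The minimum degree of a finite simple graph. -/
noncomputable def gMinDeg {V : Type*} [Fintype V] (G : SimpleGraph V) : ℕ :=
  sInf (Set.range (gdeg G))

/-! A map `f : V → Fin 2` is the indicator of a set `S`, and then
`R_f = vol G · e(S, Sᶜ) / (vol S · vol Sᶜ)`. In `K_{n,n}`, if `S` has `a` vertices in one part and
`b` in the other, the numerator of `R_f - 1` is `n² (a - b)²`, so `λ(K_{n,n}, K₂) = 1`, attained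
by `S = {x, y}` in both parts. The added edge `xy` lies inside this `S`: the cut is unchanged while
`vol G` and `vol S` grow by `2`, so `R_f = (4n² + 4) / (4n² + 2n) < 1` once `n ≥ 3`. -/

open SimpleGraph

local notation "dK₂" => fun a b : Fin 2 => (SimpleGraph.dist (⊤ : SimpleGraph (Fin 2)) a b : ℝ)

lemma dist_top_fin_two_sq (a b : Fin 2) :
    ((⊤ : SimpleGraph (Fin 2)).dist a b : ℝ) ^ 2 = (((a : ℕ) : ℝ) - (b : ℕ)) ^ 2 := by
  fin_cases a <;> fin_cases b <;> simp [dist_eq_one_iff_adj]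

lemma fin_two_val_sq (a : Fin 2) : ((a : ℕ) : ℝ) ^ 2 = (a : ℕ) := by
  fin_cases a <;> simp

section General

variable {V : Type*} [Fintype V]

lemma Rf_nonneg {X : Type*} (G : SimpleGraph V) (d : X → X → ℝ) (f : V → X) :
    0 ≤ Rf G d f := by
  unfold Rf
  refine div_nonneg (mul_nonneg (Nat.cast_nonneg _) (div_nonneg ?_ zero_le_two))
    (div_nonneg ?_ zero_le_two) <;>
  exact sum_nonneg fun u _ ↦ sum_nonneg fun v _ ↦ by split_ifs <;> positivity

lemma lam_le_Rf {X : Type*} (G : SimpleGraph V) (d : X → X → ℝ) {f : V → X}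
    (hf : ∃ u v, f u ≠ f v) : lam G d ≤ Rf G d f :=
  csInf_le ⟨0, fun _ ⟨g, _, hg⟩ ↦ hg ▸ Rf_nonneg G d g⟩ ⟨f, hf, rfl⟩

lemma le_lam {X : Type*} (G : SimpleGraph V) (d : X → X → ℝ) {c : ℝ}
    (hne : ∃ f : V → X, ∃ u v, f u ≠ f v) (h : ∀ f : V → X, (∃ u v, f u ≠ f v) → c ≤ Rf G d f) :
    c ≤ lam G d := by
  obtain ⟨f, hf⟩ := hne
  exact le_csInf ⟨_, f, hf, rfl⟩ fun _ ⟨g, hg, hr⟩ ↦ hr ▸ h g hg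

variable (G : SimpleGraph V)

noncomputable def edgeEnergy (g : V → ℝ) : ℝ :=
  ∑ u, ∑ v, if G.Adj u v then (g u - g v) ^ 2 else 0

noncomputable def degVol (g : V → ℝ) : ℝ :=
  ∑ v, g v * gdeg G v

lemma sum_gdeg_eq_gvol : ∑ v, (gdeg G v : ℝ) = gvol G := by
  simp [gvol]

lemma sum_sum_sq_sub_mul_mul (g w : V → ℝ) :
    ∑ u, ∑ v, (g u - g v) ^ 2 * w u * w v
      = 2 * (∑ v, w v) * (∑ v, g v ^ 2 * w v) - 2 * (∑ v, g v * w v) ^ 2 := by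
  have h : ∀ u v, (g u - g v) ^ 2 * w u * w v
      = (g u ^ 2 * w u) * w v + w u * (g v ^ 2 * w v) - (2 * (g u * w u)) * (g v * w v) := by
    intros; ring
  simp only [h, sum_add_distrib, sum_sub_distrib, ← mul_sum, ← sum_mul]
  ring

/-- For `S = f⁻¹(1)`, the `edgeEnergy` of its indicator is `2 e(S, Sᶜ)` and its `degVol`
is `vol S`. -/
lemma Rf_fin_two (f : V → Fin 2) :
    Rf G dK₂ f = gvol G * (edgeEnergy G (fun v ↦ ((f v : ℕ) : ℝ)) / 2) /
      (degVol G (fun v ↦ ((f v : ℕ) : ℝ)) * (gvol G - degVol G (fun v ↦ ((f v : ℕ) : ℝ)))) := by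
  have hden : (∑ u, ∑ v, if u ≠ v then ((⊤ : SimpleGraph (Fin 2)).dist (f u) (f v) : ℝ) ^ 2
      * (gdeg G u : ℝ) * (gdeg G v : ℝ) else 0)
      = ∑ u, ∑ v, (((f u : ℕ) : ℝ) - (f v : ℕ)) ^ 2 * (gdeg G u : ℝ) * (gdeg G v : ℝ) := by
    refine sum_congr rfl fun u _ ↦ sum_congr rfl fun v _ ↦ ?_
    rcases eq_or_ne u v with rfl | huv
    · simp
    · rw [if_pos huv, dist_top_fin_two_sq]
  unfold Rf
  rw [hden, sum_sum_sq_sub_mul_mul, sum_gdeg_eq_gvol]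
  simp only [fin_two_val_sq, edgeEnergy, degVol, dist_top_fin_two_sq]
  congr 1
  ring

end General

section CompleteBipartite

variable {α β : Type*} [Fintype α] [Fintype β]

lemma gdeg_completeBipartiteGraph_inl (a : α) :
    gdeg (completeBipartiteGraph α β) (Sum.inl a) = Fintype.card β := by
  have h : (completeBipartiteGraph α β).neighborSet (Sum.inl a) = Set.range Sum.inr := by
    ext w; cases w <;> simp
  rw [gdeg, h, Set.ncard_range_of_injective Sum.inr_injective, Nat.card_eq_fintype_card]

lemma gdeg_completeBipartiteGraph_inr (b : β) :
    gdeg (completeBipartiteGraph α β) (Sum.inr b) = Fintype.card α := by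
  have h : (completeBipartiteGraph α β).neighborSet (Sum.inr b) = Set.range Sum.inl := by
    ext w; cases w <;> simp
  rw [gdeg, h, Set.ncard_range_of_injective Sum.inl_injective, Nat.card_eq_fintype_card]

lemma gvol_completeBipartiteGraph :
    gvol (completeBipartiteGraph α β) = 2 * Fintype.card α * Fintype.card β := by
  simp only [gvol, Fintype.sum_sum_type, gdeg_completeBipartiteGraph_inl,
    gdeg_completeBipartiteGraph_inr, sum_const, card_univ, smul_eq_mul]
  ring

lemma degVol_completeBipartiteGraph (g : α ⊕ β → ℝ) :
    degVol (completeBipartiteGraph α β) g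
      = Fintype.card β * ∑ a, g (Sum.inl a) + Fintype.card α * ∑ b, g (Sum.inr b) := by
  simp only [degVol, Fintype.sum_sum_type, gdeg_completeBipartiteGraph_inl,
    gdeg_completeBipartiteGraph_inr, ← sum_mul]
  ring

lemma sum_sum_sq_sub_of_sq_eq_self (p : α → ℝ) (q : β → ℝ) (hp : ∀ a, p a ^ 2 = p a)
    (hq : ∀ b, q b ^ 2 = q b) :
    ∑ a, ∑ b, (p a - q b) ^ 2
      = Fintype.card β * ∑ a, p a + Fintype.card α * ∑ b, q b - 2 * (∑ a, p a) * ∑ b, q b := by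
  have h : ∀ a b, (p a - q b) ^ 2 = p a + q b - 2 * p a * q b := by
    intro a b; rw [sub_sq, hp, hq]; ring
  simp only [h, sum_add_distrib, sum_sub_distrib, ← mul_sum, ← sum_mul, sum_const,
    card_univ, nsmul_eq_mul]

lemma edgeEnergy_completeBipartiteGraph (g : α ⊕ β → ℝ) (hg : ∀ v, g v ^ 2 = g v) :
    edgeEnergy (completeBipartiteGraph α β) g
      = 2 * (Fintype.card β * ∑ a, g (Sum.inl a) + Fintype.card α * ∑ b, g (Sum.inr b)
          - 2 * (∑ a, g (Sum.inl a)) * ∑ b, g (Sum.inr b)) := by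
  have hsymm : ∑ b, ∑ a, (g (Sum.inr b) - g (Sum.inl a)) ^ 2
      = ∑ a, ∑ b, (g (Sum.inl a) - g (Sum.inr b)) ^ 2 := by
    rw [sum_comm]; simp only [sub_sq_comm (g (Sum.inr _))]
  simp only [edgeEnergy, Fintype.sum_sum_type, completeBipartiteGraph_adj, Sum.isLeft_inl,
    Sum.isRight_inl, Sum.isLeft_inr, Sum.isRight_inr]
  simp only [Bool.false_eq_true, and_false, and_true, or_false, false_or, if_true, if_false,
    sum_const_zero, zero_add, add_zero, hsymm,
    sum_sum_sq_sub_of_sq_eq_self _ _ (fun a ↦ hg (Sum.inl a)) (fun b ↦ hg (Sum.inr b))]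
  ring

end CompleteBipartite

lemma sum_fin_two_pos_and_lt_card {V : Type*} [Fintype V] {f : V → Fin 2}
    (hf : ∃ u v, f u ≠ f v) :
    0 < ∑ v, ((f v : ℕ) : ℝ) ∧ ∑ v, ((f v : ℕ) : ℝ) < Fintype.card V := by
  obtain ⟨u, v, huv⟩ := hf
  have hval : ∀ a b : Fin 2, a ≠ b → a = 1 ∧ b = 0 ∨ a = 0 ∧ b = 1 := by decide
  obtain ⟨w, z, hw, hz⟩ : ∃ w z, f w = 1 ∧ f z = 0 := by
    rcases hval _ _ huv with ⟨hu, hv⟩ | ⟨hu, hv⟩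
    exacts [⟨u, v, hu, hv⟩, ⟨v, u, hv, hu⟩]
  have hle : ∀ a : Fin 2, ((a : ℕ) : ℝ) ≤ 1 := fun a ↦ by fin_cases a <;> simp
  constructor
  · exact sum_pos' (fun _ _ ↦ Nat.cast_nonneg _) ⟨w, mem_univ w, by simp [hw]⟩
  · simpa using sum_lt_sum (fun v _ ↦ hle (f v)) ⟨z, mem_univ z, by simp [hz]⟩

lemma one_le_Rf_completeBipartiteGraph {n : ℕ} {f : Fin n ⊕ Fin n → Fin 2}
    (hf : ∃ u v, f u ≠ f v) : 1 ≤ Rf (completeBipartiteGraph (Fin n) (Fin n)) dK₂ f := by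
  obtain ⟨hpos, hlt⟩ := sum_fin_two_pos_and_lt_card hf
  rw [Rf_fin_two, edgeEnergy_completeBipartiteGraph _ fun v ↦ fin_two_val_sq (f v),
    degVol_completeBipartiteGraph, gvol_completeBipartiteGraph]
  rw [Fintype.sum_sum_type] at hpos hlt
  simp only [Fintype.card_sum, Fintype.card_fin] at hlt ⊢
  set A := ∑ a, ((f (Sum.inl a) : ℕ) : ℝ)
  set B := ∑ b, ((f (Sum.inr b) : ℕ) : ℝ)
  push_cast at hlt ⊢
  have hn : (0 : ℝ) < n := by linarith
  have hden : 0 < (n * A + n * B) * (2 * n * n - (n * A + n * B)) := by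
    have : 0 < 2 * (n : ℝ) - (A + B) := by linarith
    nlinarith [mul_pos (mul_pos hn hn) (mul_pos hpos this)]
  rw [le_div_iff₀ hden]
  -- the gap is `n² (A - B)²`
  nlinarith [mul_nonneg (sq_nonneg (n : ℝ)) (sq_nonneg (A - B))]

section SupEdge

variable {V : Type*} (G : SimpleGraph V) {u v : V}

lemma neighborSet_sup_edge_left (huv : u ≠ v) :
    (G ⊔ edge u v).neighborSet u = insert v (G.neighborSet u) := by
  ext w
  simp only [mem_neighborSet, sup_adj, edge_adj, Set.mem_insert_iff]
  grind

lemma neighborSet_sup_edge_of_ne {w : V} (hwu : w ≠ u) (hwv : w ≠ v) :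
    (G ⊔ edge u v).neighborSet w = G.neighborSet w := by
  ext z
  simp [edge_adj, hwu, hwv]

lemma card_filter_eq_or_eq [Fintype V] (huv : u ≠ v) : #{w | w = u ∨ w = v} = 2 := by
  rw [show ({w | w = u ∨ w = v} : Finset V) = {u, v} by ext; simp, card_pair huv]

variable [Fintype V]

lemma gdeg_sup_edge (huv : u ≠ v) (hG : ¬G.Adj u v) (w : V) :
    gdeg (G ⊔ edge u v) w = gdeg G w + if w = u ∨ w = v then 1 else 0 := by
  rcases eq_or_ne w u with rfl | hwu
  · rw [gdeg, neighborSet_sup_edge_left G huv,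
      Set.ncard_insert_of_notMem (by simpa using hG), if_pos (.inl rfl), gdeg]
  rcases eq_or_ne w v with rfl | hwv
  · rw [gdeg, edge_comm, neighborSet_sup_edge_left G huv.symm,
      Set.ncard_insert_of_notMem (by simpa using fun h ↦ hG h.symm), if_pos (.inr rfl), gdeg]
  · simp [gdeg, neighborSet_sup_edge_of_ne G hwu hwv, hwu, hwv]

lemma gvol_sup_edge (huv : u ≠ v) (hG : ¬G.Adj u v) : gvol (G ⊔ edge u v) = gvol G + 2 := by
  simp only [gvol, gdeg_sup_edge G huv hG, sum_add_distrib, sum_boole, card_filter_eq_or_eq huv,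
    Nat.cast_ofNat]

lemma degVol_sup_edge (huv : u ≠ v) (hG : ¬G.Adj u v) (g : V → ℝ) :
    degVol (G ⊔ edge u v) g = degVol G g + g u + g v := by
  have h : ∀ w, g w * (gdeg (G ⊔ edge u v) w : ℝ)
      = g w * gdeg G w + ((if w = u then g w else 0) + if w = v then g w else 0) := by
    intro w
    rw [gdeg_sup_edge G huv hG]
    rcases eq_or_ne w u with rfl | hwu
    · simp [huv, mul_add]
    rcases eq_or_ne w v with rfl | hwv
    · simp [hwu, mul_add]
    · simp [hwu, hwv]
  simp only [degVol, h, sum_add_distrib, sum_ite_eq', mem_univ, if_true, add_assoc]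

lemma edgeEnergy_sup_edge_of_eq {g : V → ℝ} (h : g u = g v) :
    edgeEnergy (G ⊔ edge u v) g = edgeEnergy G g := by
  refine sum_congr rfl fun a _ ↦ sum_congr rfl fun b _ ↦ ?_
  by_cases hab : G.Adj a b
  · simp [hab]
  · by_cases he : (edge u v).Adj a b
    · obtain ⟨⟨rfl, rfl⟩ | ⟨rfl, rfl⟩, -⟩ := (edge_adj _ _ _ _).1 he <;> simp [h]
    · simp [hab, he]

end SupEdge

section PairIndicator

variable {α : Type*} {x y : α}

noncomputable def pairIndicator (x y : α) (a : α) : Fin 2 :=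
  if a = x ∨ a = y then 1 else 0

lemma sum_pairIndicator [Fintype α] (hxy : x ≠ y) :
    ∑ a, ((pairIndicator x y a : ℕ) : ℝ) = 2 := by
  simp only [pairIndicator, apply_ite, Fin.val_one, Fin.val_zero, Nat.cast_one, Nat.cast_zero,
    sum_boole, card_filter_eq_or_eq hxy, Nat.cast_ofNat]

lemma exists_pairIndicator_ne [Fintype α] (h : 3 ≤ Fintype.card α) :
    ∃ a b, pairIndicator x y a ≠ pairIndicator x y b := by
  obtain ⟨z, -, hz⟩ := exists_mem_notMem_of_card_lt_card (s := {x, y}) (t := univ)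
    (card_le_two.trans_lt (by rwa [card_univ]))
  refine ⟨x, z, ?_⟩
  simp only [mem_insert, mem_singleton] at hz
  simp [pairIndicator, hz]

end PairIndicator

section PairCut

variable {n : ℕ} {x y : Fin n}

lemma Rf_completeBipartiteGraph_pairIndicator (hn : 3 ≤ n) (hxy : x ≠ y) :
    Rf (completeBipartiteGraph (Fin n) (Fin n)) dK₂
      (Sum.elim (pairIndicator x y) (pairIndicator x y)) = 1 := by
  rw [Rf_fin_two, edgeEnergy_completeBipartiteGraph _ fun v ↦ fin_two_val_sq _,
    degVol_completeBipartiteGraph, gvol_completeBipartiteGraph]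
  simp only [Sum.elim_inl, Sum.elim_inr, sum_pairIndicator hxy, Fintype.card_fin]
  have hn' : (3 : ℝ) ≤ n := by exact_mod_cast hn
  push_cast
  rw [div_eq_one_iff_eq (by nlinarith [mul_pos (mul_pos (by positivity : (0 : ℝ) < n)
    (by positivity : (0 : ℝ) < n)) (by linarith : (0 : ℝ) < n - 2)])]
  ring

lemma Rf_sup_edge_pairIndicator_lt_one (hn : 3 ≤ n) (hxy : x ≠ y) :
    Rf (completeBipartiteGraph (Fin n) (Fin n) ⊔ edge (Sum.inl x) (Sum.inl y)) dK₂
      (Sum.elim (pairIndicator x y) (pairIndicator x y)) < 1 := by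
  have hne : (Sum.inl x : Fin n ⊕ Fin n) ≠ Sum.inl y := by simpa using hxy
  have hnadj : ¬(completeBipartiteGraph (Fin n) (Fin n)).Adj (Sum.inl x) (Sum.inl y) := by simp
  have hx : pairIndicator x y x = 1 := if_pos (.inl rfl)
  have hy : pairIndicator x y y = 1 := if_pos (.inr rfl)
  rw [Rf_fin_two, edgeEnergy_sup_edge_of_eq _ (by simp only [Sum.elim_inl, hx, hy]),
    degVol_sup_edge _ hne hnadj, gvol_sup_edge _ hne hnadj,
    edgeEnergy_completeBipartiteGraph _ fun v ↦ fin_two_val_sq _,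
    degVol_completeBipartiteGraph, gvol_completeBipartiteGraph]
  simp only [Sum.elim_inl, Sum.elim_inr, sum_pairIndicator hxy, Fintype.card_fin, hx, hy,
    Fin.val_one]
  push_cast
  have hn' : (3 : ℝ) ≤ n := by exact_mod_cast hn
  rw [div_lt_one (by nlinarith [mul_pos (mul_pos (by positivity : (0 : ℝ) < 2 * n + 1)
    (by positivity : (0 : ℝ) < n)) (by linarith : (0 : ℝ) < n - 2)])]
  nlinarith

end PairCut

/-- For `n ≥ 3`, let `G = K_{n,n}` and let `G'` be obtained from `G` by adding
one edge between two distinct vertices `x, y` of the first part.  Then `λ(G', K₂) < 1`,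
while `λ(G, K₂) = 1`; in particular adding an edge can strictly decrease `λ(·, K₂)`. -/
theorem stmt_18 (n : ℕ) (hn : 3 ≤ n) (x y : Fin n) (hxy : x ≠ y)
    (G' : SimpleGraph (Fin n ⊕ Fin n))
    (hG' : G' = completeBipartiteGraph (Fin n) (Fin n) ⊔
        SimpleGraph.fromEdgeSet {s(Sum.inl x, Sum.inl y)}) :
    lam G' (fun a b : Fin 2 => ((⊤ : SimpleGraph (Fin 2)).dist a b : ℝ)) < 1 ∧
    lam (completeBipartiteGraph (Fin n) (Fin n))
      (fun a b : Fin 2 => ((⊤ : SimpleGraph (Fin 2)).dist a b : ℝ)) = 1 := by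
  subst hG'
  obtain ⟨a, b, hab⟩ := exists_pairIndicator_ne (x := x) (y := y) (by simpa using hn)
  have hf₀ : ∃ u v, Sum.elim (pairIndicator x y) (pairIndicator x y) u
      ≠ Sum.elim (pairIndicator x y) (pairIndicator x y) v := ⟨.inl a, .inl b, hab⟩
  refine ⟨(lam_le_Rf _ _ hf₀).trans_lt (Rf_sup_edge_pairIndicator_lt_one hn hxy), le_antisymm ?_ ?_⟩
  · exact (lam_le_Rf _ _ hf₀).trans_eq (Rf_completeBipartiteGraph_pairIndicator hn hxy)
  · exact le_lam _ _ ⟨_, hf₀⟩ fun f hf ↦ one_le_Rf_completeBipartiteGraph hf
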